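/- (Extended curvature–dimension inequality) Let n ≥ 2, let F : ℝⁿ → [0,∞) be a strongly convex Minkowski norm of class C² on ℝⁿ∖{0}, let ξ ∈ ℝⁿ∖{0}, write F_k = ∂F/∂ξ_k(ξ) and a_{ij} = ∂²(½F²)/∂ξ_i∂ξ_j(ξ). Then for every symmetric n×n real matrix U = (U_{ij}): Σ_{i,j,k,l} a_{ij} a_{kl} U_{ik} U_{jl} ≥ (Σ_{i,j} a_{ij} U_{ij})²/n + (n/(n−1)) · ( (Σ_{i,j} a_{ij} U_{ij})/n − Σ_{i,j} F_i F_j U_{ij} )². -/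

import Mathlib

/-!
Write `A = (a_{ij}(ξ))` and `ℓ = (F_i(ξ))`. Euler's identity for the `1`-homogeneous functions `F`
and `∇(½F²)` gives `A ξ = F(ξ) ℓ` and `ℓ ⬝ ξ = F(ξ)`. Factor `A = Rᵀ R` and put `B = R U Rᵀ`,
`e = R ξ / F(ξ)`: then `e` is a unit vector, `tr B = tr (A U)`, `tr B² = tr (A U A U)` and
`e ⬝ B e = ℓ ⬝ U ℓ`. With `t = tr B` and `c = e ⬝ B e` the lower bound in the claim equals
`c² + (t - c)² / (n - 1)`, and this is at most `tr B²` because `tr M² ≥ 0` for the symmetric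
matrix `M = B - (c - s) e eᵀ - s I`, `s = (t - c) / (n - 1)`.
-/

open Real

noncomputable section

/-- The `i`-th partial derivative of `f : ℝⁿ → ℝ` at `x`. -/
def pd {n : ℕ} (f : EuclideanSpace ℝ (Fin n) → ℝ) (i : Fin n)
    (x : EuclideanSpace ℝ (Fin n)) : ℝ :=
  fderiv ℝ f x (EuclideanSpace.single i 1)

/-- `a_{ij}(ξ) = ∂²(½F²)/∂ξ_i∂ξ_j (ξ)`. -/
def aCoeff {n : ℕ} (F : EuclideanSpace ℝ (Fin n) → ℝ) (i j : Fin n)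
    (ξ : EuclideanSpace ℝ (Fin n)) : ℝ :=
  pd (pd (fun η => F η ^ 2 / 2) i) j ξ

/-- A Minkowski norm on ℝⁿ: nonnegative, convex, even, positively 1-homogeneous,
and positive away from the origin. -/
structure IsMinkowskiNorm {n : ℕ} (F : EuclideanSpace ℝ (Fin n) → ℝ) : Prop where
  nonneg : ∀ ξ, 0 ≤ F ξ
  convexOn : ConvexOn ℝ Set.univ F
  even : ∀ ξ, F (-ξ) = F ξ
  homog : ∀ (t : ℝ) (ξ : EuclideanSpace ℝ (Fin n)), F (t • ξ) = |t| * F ξ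
  pos : ∀ ξ, ξ ≠ 0 → 0 < F ξ

/-- A strongly convex Minkowski norm of class C²: additionally `F` is C² away from
the origin and the Hessian of `F²` is positive definite away from the origin. -/
structure IsStronglyConvexMinkowskiNormC2 {n : ℕ}
    (F : EuclideanSpace ℝ (Fin n) → ℝ) extends IsMinkowskiNorm F : Prop where
  contDiff2 : ContDiffOn ℝ 2 F {(0 : EuclideanSpace ℝ (Fin n))}ᶜ
  posDef : ∀ ξ : EuclideanSpace ℝ (Fin n), ξ ≠ 0 →
    ∀ V : EuclideanSpace ℝ (Fin n), V ≠ 0 →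
      0 < ∑ i, ∑ j, aCoeff F i j ξ * V i * V j

open Matrix

namespace Matrix

variable {ι : Type*} [Fintype ι] {A U : Matrix ι ι ℝ}

theorem trace_mul_of_isSymm (hU : U.IsSymm) : (A * U).trace = ∑ i, ∑ j, A i j * U i j := by
  simp only [trace, diag, mul_apply, hU.apply]

theorem trace_mul_mul_mul_of_isSymm (hA : A.IsSymm) (hU : U.IsSymm) :
    (A * U * (A * U)).trace = ∑ i, ∑ j, ∑ k, ∑ l, A i j * A k l * U i k * U j l := by
  simp only [trace, diag, mul_apply, Finset.sum_mul, Finset.mul_sum]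
  refine Finset.sum_congr rfl fun i _ => ?_
  conv_lhs => rw [Finset.sum_comm]; arg 2; ext k; rw [Finset.sum_comm]
  conv_lhs => rw [Finset.sum_comm]
  refine Finset.sum_congr rfl fun j _ => Finset.sum_congr rfl fun k _ =>
    Finset.sum_congr rfl fun l _ => ?_
  rw [hA.apply k l, hU.apply i k]
  ring

theorem dotProduct_mulVec_eq_sum (ℓ : ι → ℝ) :
    ℓ ⬝ᵥ U *ᵥ ℓ = ∑ i, ∑ j, ℓ i * ℓ j * U i j := by
  simp only [dotProduct, mulVec, Finset.mul_sum]
  refine Finset.sum_congr rfl fun i _ => Finset.sum_congr rfl fun j _ => by ring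

theorem IsSymm.le_trace_mul_self [DecidableEq ι] {B : Matrix ι ι ℝ} (hB : B.IsSymm)
    {e : ι → ℝ} (he : e ⬝ᵥ e = 1) (hι : 1 < Fintype.card ι) :
    (e ⬝ᵥ B *ᵥ e) ^ 2 + (B.trace - e ⬝ᵥ B *ᵥ e) ^ 2 / (Fintype.card ι - 1)
      ≤ (B * B).trace := by
  set c := e ⬝ᵥ B *ᵥ e
  set m : ℝ := Fintype.card ι - 1
  have hm : m ≠ 0 := by simp only [m, sub_ne_zero]; exact_mod_cast hι.ne'
  set s := (B.trace - c) / m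
  set P := vecMulVec e e
  have hPP : P * P = P := by rw [vecMulVec_mul_vecMulVec, he, one_smul]
  have hBP : (B * P).trace = c := by
    rw [mul_vecMulVec, trace_vecMulVec, dotProduct_comm]
  have hPB : (P * B).trace = c := by rw [trace_mul_comm, hBP]
  have hP : P.trace = 1 := by rw [trace_vecMulVec, he]
  set M := B - (c - s) • P - s • (1 : Matrix ι ι ℝ)
  have hM : Mᵀ = M := by simp [M, P, hB.eq, transpose_vecMulVec]
  have hM_nonneg : 0 ≤ (Mᵀ * M).trace := by
    simpa using (posSemidef_conjTranspose_mul_self M).trace_nonneg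
  have hM_trace : (Mᵀ * M).trace = (B * B).trace - c ^ 2 - (B.trace - c) ^ 2 / m := by
    rw [hM]
    simp only [M, sub_mul, mul_sub, Matrix.smul_mul, Matrix.mul_smul, Matrix.mul_one,
      Matrix.one_mul, smul_smul, trace_sub, trace_smul, hPP, hBP, hPB, hP, trace_one,
      smul_eq_mul, s]
    field_simp
    ring
  linarith

open scoped MatrixOrder in
theorem PosSemidef.le_trace_mul_mul_mul [DecidableEq ι] (hA : A.PosSemidef) (hU : U.IsSymm) {x ℓ : ι → ℝ} {f : ℝ} (hf : f ≠ 0)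
    (hAx : A *ᵥ x = f • ℓ) (hℓx : ℓ ⬝ᵥ x = f) (hι : 1 < Fintype.card ι) :
    (ℓ ⬝ᵥ U *ᵥ ℓ) ^ 2 + ((A * U).trace - ℓ ⬝ᵥ U *ᵥ ℓ) ^ 2 / (Fintype.card ι - 1)
      ≤ (A * U * (A * U)).trace := by
  obtain ⟨R, hR⟩ := CStarAlgebra.nonneg_iff_eq_star_mul_self.mp hA.nonneg
  rw [star_eq_conjTranspose, conjTranspose_eq_transpose_of_trivial] at hR
  have hRR (v w : ι → ℝ) : (R *ᵥ v) ⬝ᵥ (R *ᵥ w) = v ⬝ᵥ A *ᵥ w := by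
    rw [hR, ← mulVec_mulVec, dotProduct_mulVec v, vecMul_transpose]
  set B := R * U * Rᵀ
  set e := f⁻¹ • R *ᵥ x
  have hB : B.IsSymm := by simp [B, IsSymm, hU.eq, Matrix.mul_assoc]
  have he : e ⬝ᵥ e = 1 := by
    simp only [e, smul_dotProduct, dotProduct_smul, hRR, hAx, smul_eq_mul, dotProduct_comm x ℓ,
      hℓx]
    field_simp
  have heBe : e ⬝ᵥ B *ᵥ e = ℓ ⬝ᵥ U *ᵥ ℓ := by
    have hBRx : B *ᵥ (R *ᵥ x) = R *ᵥ (U *ᵥ (A *ᵥ x)) := by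
      simp only [B, hR, mulVec_mulVec, Matrix.mul_assoc]
    have hAs : Aᵀ = A := by simpa using hA.1.eq
    simp only [e, smul_dotProduct, mulVec_smul, dotProduct_smul, hBRx, hRR, smul_eq_mul]
    rw [dotProduct_mulVec, ← hAs, vecMul_transpose, hAs, hAx]
    simp only [mulVec_smul, smul_dotProduct, dotProduct_smul, smul_eq_mul]
    field_simp
  have htr : B.trace = (A * U).trace := by rw [trace_mul_cycle, hR]
  have htr2 : (B * B).trace = (A * U * (A * U)).trace := by
    calc (B * B).trace = (Rᵀ * (R * U * Rᵀ * R * U)).trace := by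
          rw [trace_mul_comm Rᵀ]; simp only [B, Matrix.mul_assoc]
      _ = (A * U * (A * U)).trace := by simp only [hR, Matrix.mul_assoc]
  simpa only [heBe, htr, htr2] using hB.le_trace_mul_self he hι

end Matrix

section Homogeneous

variable {E G : Type*} [NormedAddCommGroup E] [NormedSpace ℝ E]
  [NormedAddCommGroup G] [NormedSpace ℝ G] {f : E → G} {x : E}

theorem fderiv_apply_self_of_pos_homogeneous {k : ℕ} (hf : DifferentiableAt ℝ f x)
    (hhom : ∀ t : ℝ, 0 < t → f (t • x) = t ^ k • f x) : fderiv ℝ f x x = (k : ℝ) • f x := by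
  have hray : HasDerivAt (fun t : ℝ => t • x) x 1 := by
    simpa using (hasDerivAt_id (1 : ℝ)).smul_const x
  have h₁ : HasDerivAt (fun t : ℝ => f (t • x)) (fderiv ℝ f x x) 1 := by
    rw [← one_smul ℝ x] at hf
    simpa [Function.comp_def] using hf.hasFDerivAt.comp_hasDerivAt (1 : ℝ) hray
  have h₂ : HasDerivAt (fun t : ℝ => f (t • x)) ((k : ℝ) • f x) 1 := by
    have hpow : HasDerivAt (fun t : ℝ => t ^ k • f x) ((k : ℝ) • f x) 1 := by
      simpa using (hasDerivAt_pow k (1 : ℝ)).smul_const (f x)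
    refine hpow.congr_of_eventuallyEq ?_
    filter_upwards [eventually_gt_nhds one_pos] with t ht using hhom t ht
  exact h₁.unique h₂

theorem fderiv_smul_of_homogeneous {t : ℝ} (ht : t ≠ 0) {k : ℕ}
    (hhom : ∀ y, f (t • y) = t ^ (k + 1) • f y) :
    fderiv ℝ f (t • x) = t ^ k • fderiv ℝ f x := by
  have h := fderiv_comp_smul (f := f) (x := x) t
  have hfun : (fun y => f (t • y)) = t ^ (k + 1) • f := funext hhom
  rw [hfun, fderiv_const_smul_field, pow_succ', mul_smul] at h
  exact (smul_right_injective _ ht h).symm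

end Homogeneous

section PartialDerivatives

variable {n : ℕ} {f : EuclideanSpace ℝ (Fin n) → ℝ} {x : EuclideanSpace ℝ (Fin n)}

theorem sum_pd_mul (f : EuclideanSpace ℝ (Fin n) → ℝ) (x v : EuclideanSpace ℝ (Fin n)) :
    ∑ i, pd f i x * v i = fderiv ℝ f x v := by
  conv_rhs => rw [← (EuclideanSpace.basisFun (Fin n) ℝ).sum_repr v]
  simp [pd, mul_comm]

theorem pd_pd_eq_fderiv_fderiv (hf : DifferentiableAt ℝ (fderiv ℝ f) x) (i j : Fin n) :
    pd (pd f i) j x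
      = fderiv ℝ (fderiv ℝ f) x (EuclideanSpace.single j 1) (EuclideanSpace.single i 1) := by
  rw [pd, show pd f i = fun y => fderiv ℝ f y (EuclideanSpace.single i 1) from rfl,
    fderiv_clm_apply hf (differentiableAt_const _)]
  simp

theorem ContDiffAt.differentiableAt_fderiv (hf : ContDiffAt ℝ 2 f x) :
    DifferentiableAt ℝ (fderiv ℝ f) x :=
  (hf.fderiv_right (m := 1) (by norm_num)).differentiableAt one_ne_zero

theorem pd_pd_comm (hf : ContDiffAt ℝ 2 f x) (i j : Fin n) :
    pd (pd f i) j x = pd (pd f j) i x := by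
  rw [pd_pd_eq_fderiv_fderiv hf.differentiableAt_fderiv,
    pd_pd_eq_fderiv_fderiv hf.differentiableAt_fderiv]
  exact hf.isSymmSndFDerivAt (by simp) _ _

theorem pd_sq_div_two (hf : DifferentiableAt ℝ f x) (i : Fin n) :
    pd (fun y => f y ^ 2 / 2) i x = f x * pd f i x := by
  have h := ((hf.hasFDerivAt.pow 2).mul_const (2⁻¹ : ℝ)).fderiv
  simp only [← div_eq_mul_inv] at h
  simp [pd, h]
  ring

end PartialDerivatives

theorem IsMinkowskiNorm.sq_div_two_smul {n : ℕ} {F : EuclideanSpace ℝ (Fin n) → ℝ}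
    (hF : IsMinkowskiNorm F) (t : ℝ) (η : EuclideanSpace ℝ (Fin n)) :
    F (t • η) ^ 2 / 2 = t ^ 2 * (F η ^ 2 / 2) := by
  rw [hF.homog, mul_pow, sq_abs]
  ring

def aMatrix {n : ℕ} (F : EuclideanSpace ℝ (Fin n) → ℝ) (ξ : EuclideanSpace ℝ (Fin n)) :
    Matrix (Fin n) (Fin n) ℝ :=
  Matrix.of fun i j => aCoeff F i j ξ

namespace IsStronglyConvexMinkowskiNormC2

variable {n : ℕ} {F : EuclideanSpace ℝ (Fin n) → ℝ} {ξ : EuclideanSpace ℝ (Fin n)}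

theorem contDiffAt (hF : IsStronglyConvexMinkowskiNormC2 F) (hξ : ξ ≠ 0) :
    ContDiffAt ℝ 2 F ξ :=
  hF.contDiff2.contDiffAt (isOpen_compl_singleton.mem_nhds hξ)

theorem contDiffAt_sq_div_two (hF : IsStronglyConvexMinkowskiNormC2 F) (hξ : ξ ≠ 0) :
    ContDiffAt ℝ 2 (fun η => F η ^ 2 / 2) ξ :=
  ((hF.contDiffAt hξ).pow 2).div_const 2

theorem sum_pd_mul_self (hF : IsStronglyConvexMinkowskiNormC2 F) (hξ : ξ ≠ 0) :
    ∑ i, pd F i ξ * ξ i = F ξ := by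
  have hhom (t : ℝ) (ht : 0 < t) : F (t • ξ) = t ^ 1 • F ξ := by
    rw [hF.homog, abs_of_pos ht, pow_one, smul_eq_mul]
  rw [sum_pd_mul, fderiv_apply_self_of_pos_homogeneous
    ((hF.contDiffAt hξ).differentiableAt two_ne_zero) hhom, Nat.cast_one, one_smul]

theorem sum_aCoeff_mul_self (hF : IsStronglyConvexMinkowskiNormC2 F) (hξ : ξ ≠ 0) (i : Fin n) :
    ∑ j, aCoeff F i j ξ * ξ j = F ξ * pd F i ξ := by
  set g := fun η => F η ^ 2 / 2
  have hg := hF.contDiffAt_sq_div_two hξ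
  have hhom (t : ℝ) (ht : 0 < t) : pd g i (t • ξ) = t ^ 1 • pd g i ξ := by
    have hfderiv := fderiv_smul_of_homogeneous (f := g) (x := ξ) ht.ne' (k := 1)
      fun η => by simp only [g, hF.sq_div_two_smul, smul_eq_mul]
    simp [pd, hfderiv]
  have hdiff : DifferentiableAt ℝ (pd g i) ξ :=
    hg.differentiableAt_fderiv.clm_apply (differentiableAt_const _)
  calc ∑ j, aCoeff F i j ξ * ξ j = fderiv ℝ (pd g i) ξ ξ := sum_pd_mul _ _ _
    _ = pd g i ξ := by
      rw [fderiv_apply_self_of_pos_homogeneous hdiff hhom, Nat.cast_one, one_smul]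
    _ = F ξ * pd F i ξ := pd_sq_div_two ((hF.contDiffAt hξ).differentiableAt two_ne_zero) i

theorem aMatrix_isSymm (hF : IsStronglyConvexMinkowskiNormC2 F) (hξ : ξ ≠ 0) :
    (aMatrix F ξ).IsSymm :=
  Matrix.ext fun i j => pd_pd_comm (hF.contDiffAt_sq_div_two hξ) j i

theorem aMatrix_posDef (hF : IsStronglyConvexMinkowskiNormC2 F) (hξ : ξ ≠ 0) :
    (aMatrix F ξ).PosDef := by
  refine .of_dotProduct_mulVec_pos (hF.aMatrix_isSymm hξ) fun v hv => ?_
  have hpos := hF.posDef ξ hξ (WithLp.toLp 2 v) (by simpa using hv)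
  simpa [aMatrix, dotProduct, Matrix.mulVec, Finset.mul_sum, mul_comm, mul_left_comm] using hpos

end IsStronglyConvexMinkowskiNormC2

/-- Extended curvature–dimension inequality:
`Σ a_{ij} a_{kl} U_{ik} U_{jl} ≥ (Σ a_{ij}U_{ij})²/n + (n/(n−1)) ((Σ a_{ij}U_{ij})/n − Σ F_iF_jU_{ij})²`
for every symmetric matrix `U`. -/
theorem extended_curvature_dimension_inequality {n : ℕ} (hn : 2 ≤ n)
    (F : EuclideanSpace ℝ (Fin n) → ℝ) (hF : IsStronglyConvexMinkowskiNormC2 F)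
    (ξ : EuclideanSpace ℝ (Fin n)) (hξ : ξ ≠ 0)
    (U : Matrix (Fin n) (Fin n) ℝ) (hU : U.IsSymm) :
    (∑ i, ∑ j, aCoeff F i j ξ * U i j) ^ 2 / (n : ℝ)
      + ((n : ℝ) / ((n : ℝ) - 1)) *
        ((∑ i, ∑ j, aCoeff F i j ξ * U i j) / (n : ℝ)
          - ∑ i, ∑ j, (pd F i ξ) * (pd F j ξ) * U i j) ^ 2
      ≤ ∑ i, ∑ j, ∑ k, ∑ l, aCoeff F i j ξ * aCoeff F k l ξ * U i k * U j l := by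
  have hAx : aMatrix F ξ *ᵥ WithLp.ofLp ξ = F ξ • fun i => pd F i ξ := by
    ext i
    simpa [aMatrix, mulVec, dotProduct] using hF.sum_aCoeff_mul_self hξ i
  have hℓx : (fun i => pd F i ξ) ⬝ᵥ WithLp.ofLp ξ = F ξ := hF.sum_pd_mul_self hξ
  have key := (hF.aMatrix_posDef hξ).posSemidef.le_trace_mul_mul_mul hU
    (hF.pos ξ hξ).ne' hAx hℓx (by rw [Fintype.card_fin]; omega)
  rw [trace_mul_of_isSymm hU, trace_mul_mul_mul_of_isSymm (hF.aMatrix_isSymm hξ) hU,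
    dotProduct_mulVec_eq_sum] at key
  simp only [aMatrix, of_apply, Fintype.card_fin] at key
  have hn' : (n : ℝ) - 1 ≠ 0 := by
    rw [sub_ne_zero]; norm_cast; omega
  refine Eq.trans_le ?_ key
  field_simp
  ring
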